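/- arXiv:math/0311382 — 4 statements merged into one kernel-verified Lean document; each statement's English description precedes it below -/
import Mathlib

section
/- For every n ≥ 1, the number of pairs (k, μ) where 1 ≤ k ≤ ⌊√n⌋ and μ is a partition of n − k² with at most k parts equals the number of partitions λ of n with λ_i − λ_{i+1} ≥ 2 for all i < ℓ(λ). -/
/-!
Adding the staircase `(2k - 1, 2k - 3, …, 3, 1)` to a weakly decreasing `k`-tuple `μ` produces
positive parts with gaps at least `2`, and raises the sum by `1 + 3 + ⋯ + (2k - 1) = k²`.
Conversely, in a partition with `m` parts and gaps at least `2`, `λ_i + 2i` is non-increasing,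
the `i`-th part from the bottom is at least `2i - 1`, and subtracting the staircase leaves a
weakly decreasing tuple; in particular `m² ≤ n`.
-/

open Finset

theorem Fin.antitone_of_succ_le {α : Type*} [Preorder α] {m : ℕ} {g : Fin m → α}
    (h : ∀ i : Fin m, ∀ hi : (i : ℕ) + 1 < m, g ⟨i + 1, hi⟩ ≤ g i) : Antitone g := by
  cases m with
  | zero => exact fun i => i.elim0
  | succ n => exact Fin.antitone_iff_succ_le.2 fun i => h i.castSucc i.succ.isLt

theorem Fin.sum_two_mul_add_one (k : ℕ) : ∑ i : Fin k, (2 * (i : ℕ) + 1) = k * k := by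
  induction k with
  | zero => rfl
  | succ k ih => rw [Fin.sum_univ_castSucc]; simp only [Fin.val_castSucc, Fin.val_last, ih]; ring

/-- Indexed from `0`: `staircase k (i - 1) = 2k - 2i + 1` is the summand in
`λ_i = μ_i + 2k - 2i + 1`. -/
def staircase (k : ℕ) (i : Fin k) : ℕ := 2 * (i.rev : ℕ) + 1

theorem staircase_apply {k : ℕ} (i : Fin k) : staircase k i = 2 * (k - 1 - i) + 1 := by
  rw [staircase, Fin.val_rev]; omega

theorem sum_staircase (k : ℕ) : ∑ i, staircase k i = k * k :=
  (Equiv.sum_comp Fin.revPerm fun i : Fin k => 2 * (i : ℕ) + 1).trans (Fin.sum_two_mul_add_one k)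

theorem sum_add_staircase {k : ℕ} (μ : Fin k → ℕ) :
    ∑ i, (μ + staircase k) i = ∑ i, μ i + k * k := by
  rw [← sum_staircase k, ← sum_add_distrib]; rfl

def HasGapTwo {m : ℕ} (f : Fin m → ℕ) : Prop :=
  ∀ i : Fin m, ∀ h : (i : ℕ) + 1 < m, f ⟨i + 1, h⟩ + 2 ≤ f i

theorem hasGapTwo_add_staircase {k : ℕ} {μ : Fin k → ℕ} (hμ : Antitone μ) :
    HasGapTwo (μ + staircase k) := by
  intro i hi
  have hstep := hμ (show i ≤ ⟨i + 1, hi⟩ from Nat.le_succ _)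
  simp only [Pi.add_apply, staircase_apply]
  omega

section Gap

variable {m : ℕ} {f : Fin m → ℕ}

theorem antitone_add_two_mul_of_gap (hgap : HasGapTwo f) :
    Antitone fun i : Fin m => f i + 2 * (i : ℕ) :=
  Fin.antitone_of_succ_le fun i hi => by have hstep := hgap i hi; dsimp only; omega

theorem staircase_le_of_gap (hgap : HasGapTwo f) (hpos : ∀ i, 1 ≤ f i) : staircase m ≤ f := by
  intro i
  have hm : 0 < m := i.pos
  have hlast : i ≤ ⟨m - 1, by omega⟩ := Nat.le_sub_one_of_lt i.isLt
  have hdrop : f ⟨m - 1, _⟩ + 2 * (m - 1) ≤ f i + 2 * i :=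
    antitone_add_two_mul_of_gap hgap hlast
  have hbottom := hpos ⟨m - 1, by omega⟩
  show staircase m i ≤ f i
  rw [staircase_apply]
  omega

theorem antitone_sub_staircase_of_gap (hgap : HasGapTwo f) (hpos : ∀ i, 1 ≤ f i) :
    Antitone (f - staircase m) := by
  intro i j hij
  have hdrop : f j + 2 * j ≤ f i + 2 * i := antitone_add_two_mul_of_gap hgap hij
  have hi := staircase_le_of_gap hgap hpos i
  have hj := staircase_le_of_gap hgap hpos j
  have hij' : (i : ℕ) ≤ j := hij
  simp only [Pi.sub_apply, staircase_apply] at hi hj ⊢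
  omega

theorem sum_sub_staircase (h : staircase m ≤ f) :
    ∑ i, (f - staircase m) i = ∑ i, f i - m * m := by
  rw [← sum_staircase m, ← sum_tsub_distrib _ fun i _ => h i]; rfl

theorem sq_le_sum_of_gap (hgap : HasGapTwo f) (hpos : ∀ i, 1 ≤ f i) : m * m ≤ ∑ i, f i :=
  sum_staircase m ▸ sum_le_sum fun i _ => staircase_le_of_gap hgap hpos i

end Gap

/-- For every `n ≥ 1`, the number of pairs `(k, μ)` with
`1 ≤ k ≤ ⌊√n⌋` (equivalently `k² ≤ n`) and `μ` a partition of `n - k²` with at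
most `k` parts (encoded as a weakly decreasing `k`-tuple of nonnegative integers
summing to `n - k²`) equals the number of partitions `λ` of `n` whose successive
parts differ by at least `2` (encoded as a tuple `λ : Fin ℓ → ℕ` of positive
parts with `λ_{i+1} + 2 ≤ λ_i`, summing to `n`). -/
theorem card_durfee_pairs_eq_card_gap_two_partitions (n : ℕ) (hn : 1 ≤ n) :
    Nat.card {p : (k : ℕ) × (Fin k → ℕ) //
        1 ≤ p.1 ∧ p.1 * p.1 ≤ n ∧ Antitone p.2 ∧ ∑ i, p.2 i = n - p.1 * p.1}
      =
    Nat.card {q : (m : ℕ) × (Fin m → ℕ) //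
        (∀ i, 1 ≤ q.2 i) ∧
        (∀ i : Fin q.1, ∀ h : (i : ℕ) + 1 < q.1, q.2 ⟨(i : ℕ) + 1, h⟩ + 2 ≤ q.2 i) ∧
        ∑ i, q.2 i = n} := by
  exact Nat.card_congr
    { toFun := fun ⟨⟨k, μ⟩, _, hkn, hμ, hsum⟩ =>
        ⟨⟨k, μ + staircase k⟩, fun _ => le_add_left (Nat.le_add_left 1 _),
          hasGapTwo_add_staircase hμ, by rw [sum_add_staircase, hsum, Nat.sub_add_cancel hkn]⟩
      invFun := fun ⟨⟨m, f⟩, hpos, hgap, hsum⟩ =>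
        ⟨⟨m, f - staircase m⟩, Nat.pos_of_ne_zero <| by rintro rfl; simp at hsum; omega,
          hsum ▸ sq_le_sum_of_gap hgap hpos, antitone_sub_staircase_of_gap hgap hpos,
          by rw [sum_sub_staircase (staircase_le_of_gap hgap hpos), hsum]⟩
      left_inv := fun ⟨⟨k, μ⟩, _, _, _, _⟩ => by simp
      right_inv := fun ⟨⟨m, f⟩, hpos, hgap, _⟩ => by
        simp [tsub_add_cancel_of_le (staircase_le_of_gap hgap hpos)] }
end

section
/- Define the degree of a power sum monomial p_ν to be ℓ(ν). For any weak composition (n_1,…,n_j) of positive integers, the lowest-degree part of the product h_{n_1} h_{n_2} ⋯ h_{n_j}, when expanded in the power sum basis, equals (p_{n_1}/n_1)(p_{n_2}/n_2)⋯(p_{n_j}/n_j). -/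
open scoped Classical

/-- The power sum symmetric function `p_m = Σ_j x_j^m`. -/
noncomputable def powerSum (m : ℕ) : MvPowerSeries ℕ ℚ :=
  fun d => if ∃ j : ℕ, d = Finsupp.single j m then 1 else 0

/-- The complete homogeneous symmetric function `h_n`. -/
noncomputable def completeHomogeneous (n : ℕ) : MvPowerSeries ℕ ℚ :=
  fun d => if (d.sum fun _ e => e) = n then 1 else 0

/-- `p_ν = p_{ν₁} p_{ν₂} ⋯` for a partition `ν`. -/
noncomputable def powerSumProd {n : ℕ} (nu : Nat.Partition n) : MvPowerSeries ℕ ℚ :=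
  (nu.parts.map powerSum).prod

/-!
Newton's identity `n h_n = ∑_{k=1}^n p_k h_{n-k}` shows, by strong induction on `n`, that
`h_n - p_n / n` is a combination of `p_ν` with `ν ⊢ n` and `ℓ(ν) ≥ 2`. As
`p_μ p_ν = p_{μ ∪ ν}`, the spans of `{p_ν : ν ⊢ N, ℓ(ν) ≥ l}` multiply like a filtration,
so expanding `∏ (p_{n_i} / n_i + (h_{n_i} - p_{n_i} / n_i))` leaves `∏ p_{n_i} / n_i` plus
terms of length `≥ j + 1`.
-/

open Finset MvPowerSeries

lemma coeff_powerSum (k : ℕ) (d : ℕ →₀ ℕ) :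
    coeff d (powerSum k) = if ∃ j, d = Finsupp.single j k then 1 else 0 := rfl

lemma coeff_completeHomogeneous (m : ℕ) (d : ℕ →₀ ℕ) :
    coeff d (completeHomogeneous m) = if d.degree = m then 1 else 0 := rfl

lemma completeHomogeneous_zero : completeHomogeneous 0 = 1 := by
  ext d
  simp [coeff_completeHomogeneous, coeff_one, Finsupp.degree_eq_zero_iff]

lemma card_filter_antidiagonal_fst_eq_single {k : ℕ} (hk : 0 < k) (d : ℕ →₀ ℕ) :
    #{q ∈ antidiagonal d | ∃ j, q.1 = Finsupp.single j k} = #{j ∈ d.support | k ≤ d j} := by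
  symm
  refine card_bij (fun j _ => (Finsupp.single j k, d - Finsupp.single j k)) ?_ ?_ ?_
  · intro j hj
    rw [mem_filter] at hj
    simp only [mem_filter, HasAntidiagonal.mem_antidiagonal]
    exact ⟨add_tsub_cancel_of_le (Finsupp.single_le_iff.2 hj.2), j, rfl⟩
  · intro j₁ _ j₂ _ h
    exact Finsupp.single_left_injective hk.ne' (congrArg Prod.fst h)
  · rintro ⟨a, b⟩ hq
    simp only [mem_filter, HasAntidiagonal.mem_antidiagonal] at hq
    obtain ⟨rfl, j, rfl⟩ := hq
    have hjk : k ≤ (Finsupp.single j k + b) j := by simp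
    refine ⟨j, mem_filter.2 ⟨Finsupp.mem_support_iff.2 (by omega), hjk⟩, ?_⟩
    simp

lemma coeff_powerSum_mul_completeHomogeneous {k : ℕ} (hk : 0 < k) (m : ℕ) (d : ℕ →₀ ℕ) :
    coeff d (powerSum k * completeHomogeneous m)
      = if d.degree = k + m then (#{j ∈ d.support | k ≤ d j} : ℚ) else 0 := by
  have hterm : ∀ q ∈ antidiagonal d,
      coeff q.1 (powerSum k) * coeff q.2 (completeHomogeneous m)
        = if (∃ j, q.1 = Finsupp.single j k) ∧ d.degree = k + m then 1 else 0 := by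
    rintro ⟨a, b⟩ hq
    rw [HasAntidiagonal.mem_antidiagonal] at hq
    subst hq
    simp only [coeff_powerSum, coeff_completeHomogeneous, map_add]
    split_ifs <;> grind [Finsupp.degree_single]
  rw [coeff_mul, sum_congr rfl hterm, sum_boole, ← card_filter_antidiagonal_fst_eq_single hk]
  split_ifs with h <;> simp [h]

lemma sum_card_filter_le_apply_eq_degree (d : ℕ →₀ ℕ) :
    ∑ k ∈ Icc 1 d.degree, #{j ∈ d.support | k ≤ d j} = d.degree := by
  simp_rw [card_filter]
  rw [sum_comm]
  conv_rhs => rw [Finsupp.degree_apply]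
  refine sum_congr rfl fun j _ => ?_
  rw [← card_filter]
  have : {k ∈ Icc 1 d.degree | k ≤ d j} = Icc 1 (d j) := by
    ext k
    have := Finsupp.le_degree j d
    simp only [mem_filter, mem_Icc]
    omega
  rw [this, Nat.card_Icc, Nat.add_sub_cancel]

theorem natCast_smul_completeHomogeneous (n : ℕ) :
    (n : ℚ) • completeHomogeneous n
      = ∑ k ∈ Icc 1 n, powerSum k * completeHomogeneous (n - k) := by
  ext d
  have hterm : ∀ k ∈ Icc 1 n, coeff d (powerSum k * completeHomogeneous (n - k))
      = if d.degree = n then (#{j ∈ d.support | k ≤ d j} : ℚ) else 0 := fun k hk => by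
    rw [coeff_powerSum_mul_completeHomogeneous (mem_Icc.1 hk).1,
      Nat.add_sub_cancel' (mem_Icc.1 hk).2]
  rw [map_smul, map_sum, coeff_completeHomogeneous, sum_congr rfl hterm, sum_ite_irrel,
    sum_const_zero]
  split_ifs with h
  · rw [← Nat.cast_sum, ← h, sum_card_filter_le_apply_eq_degree, smul_eq_mul, mul_one]
  · rw [smul_zero]

@[simps]
def Nat.Partition.add {a b : ℕ} (μ : a.Partition) (ν : b.Partition) : (a + b).Partition where
  parts := μ.parts + ν.parts
  parts_pos hi := (Multiset.mem_add.1 hi).elim μ.parts_pos ν.parts_pos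
  parts_sum := by rw [Multiset.sum_add, μ.parts_sum, ν.parts_sum]

lemma powerSumProd_add {a b : ℕ} (μ : a.Partition) (ν : b.Partition) :
    powerSumProd (μ.add ν) = powerSumProd μ * powerSumProd ν := by
  simp [powerSumProd, Multiset.prod_add]

noncomputable def powerSumFiltration (N j : ℕ) : Submodule ℚ (MvPowerSeries ℕ ℚ) :=
  Submodule.span ℚ <|
    powerSumProd (n := N) '' ↑(univ.filter fun ν : N.Partition => j ≤ Multiset.card ν.parts)

lemma powerSumProd_mem_powerSumFiltration {N j : ℕ} {ν : N.Partition}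
    (h : j ≤ Multiset.card ν.parts) : powerSumProd ν ∈ powerSumFiltration N j :=
  Submodule.subset_span ⟨ν, by simpa using h, rfl⟩

lemma mem_powerSumFiltration_iff {N j : ℕ} {x : MvPowerSeries ℕ ℚ} :
    x ∈ powerSumFiltration N j ↔ ∃ c : N.Partition → ℚ,
      ∑ ν ∈ univ.filter (fun ν : N.Partition => j ≤ Multiset.card ν.parts),
        c ν • powerSumProd ν = x :=
  Submodule.mem_span_image_finset_iff_exists_fun' ℚ

lemma powerSumFiltration_antitone (N : ℕ) : Antitone (powerSumFiltration N) := by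
  intro i j hij
  refine Submodule.span_mono (Set.image_mono fun ν hν => ?_)
  simp only [coe_filter, mem_univ, true_and, Set.mem_ofPred_eq] at hν ⊢
  omega

lemma one_mem_powerSumFiltration : 1 ∈ powerSumFiltration 0 0 := by
  simpa [powerSumProd] using
    powerSumProd_mem_powerSumFiltration (ν := (default : Nat.Partition 0)) (j := 0) le_rfl

lemma powerSum_mem_powerSumFiltration {k : ℕ} (hk : 0 < k) :
    powerSum k ∈ powerSumFiltration k 1 := by
  simpa [powerSumProd, hk.ne'] using
    powerSumProd_mem_powerSumFiltration (ν := Nat.Partition.indiscrete k) (by simp [hk.ne'])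

lemma mul_mem_powerSumFiltration {a b i j : ℕ} {x y : MvPowerSeries ℕ ℚ}
    (hx : x ∈ powerSumFiltration a i) (hy : y ∈ powerSumFiltration b j) :
    x * y ∈ powerSumFiltration (a + b) (i + j) := by
  suffices powerSumFiltration a i * powerSumFiltration b j
      ≤ powerSumFiltration (a + b) (i + j) from this (Submodule.mul_mem_mul hx hy)
  rw [powerSumFiltration, powerSumFiltration, Submodule.span_mul_span, Submodule.span_le]
  rintro _ ⟨_, ⟨μ, hμ, rfl⟩, _, ⟨ν, hν, rfl⟩, rfl⟩
  simp only [coe_filter, mem_univ, true_and, Set.mem_ofPred_eq] at hμ hν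
  simpa [powerSumProd_add] using
    powerSumProd_mem_powerSumFiltration (ν := μ.add ν) (j := i + j) (by simp; omega)

lemma natCast_smul_completeHomogeneous_sub_powerSum {n : ℕ} (hn : 0 < n) :
    (n : ℚ) • completeHomogeneous n - powerSum n
      = ∑ k ∈ Ico 1 n, powerSum k * completeHomogeneous (n - k) := by
  rw [natCast_smul_completeHomogeneous, ← Ico_insert_right hn, sum_insert (by simp), Nat.sub_self,
    completeHomogeneous_zero, mul_one, add_sub_cancel_left]

lemma completeHomogeneous_sub_mem_powerSumFiltration {n : ℕ} (hn : 0 < n) :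
    completeHomogeneous n - (n : ℚ)⁻¹ • powerSum n ∈ powerSumFiltration n 2 := by
  induction n using Nat.strong_induction_on with
  | _ n ih =>
    have hmem_one :
        ∀ m, 0 < m → m < n → completeHomogeneous m ∈ powerSumFiltration m 1 := by
      intro m hm hmn
      rw [← sub_add_cancel (completeHomogeneous m) ((m : ℚ)⁻¹ • powerSum m)]
      exact add_mem (powerSumFiltration_antitone m (by norm_num) (ih m hmn hm))
        (Submodule.smul_mem _ _ (powerSum_mem_powerSumFiltration hm))
    have hsum :
        ∑ k ∈ Ico 1 n, powerSum k * completeHomogeneous (n - k) ∈ powerSumFiltration n 2 :=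
      sum_mem fun k hk => by
        obtain ⟨hk1, hkn⟩ := mem_Ico.1 hk
        simpa [Nat.add_sub_cancel' hkn.le] using mul_mem_powerSumFiltration
          (powerSum_mem_powerSumFiltration hk1) (hmem_one (n - k) (by omega) (by omega))
    have hn' : (n : ℚ) ≠ 0 := by positivity
    have := Submodule.smul_mem _ (n : ℚ)⁻¹
      (natCast_smul_completeHomogeneous_sub_powerSum hn ▸ hsum)
    rwa [smul_sub, smul_smul, inv_mul_cancel₀ hn', one_smul] at this

lemma prod_mem_powerSumFiltration {ι : Type*} (s : Finset ι) {n a : ι → ℕ}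
    {x : ι → MvPowerSeries ℕ ℚ} (hx : ∀ i ∈ s, x i ∈ powerSumFiltration (n i) (a i)) :
    ∏ i ∈ s, x i ∈ powerSumFiltration (∑ i ∈ s, n i) (∑ i ∈ s, a i) := by
  induction s using Finset.cons_induction with
  | empty => simpa using one_mem_powerSumFiltration
  | cons i s hi ih =>
    rw [prod_cons, sum_cons, sum_cons]
    exact mul_mem_powerSumFiltration (hx i (mem_cons_self i s))
      (ih fun k hk => hx k (mem_cons_of_mem hk))

lemma prod_sub_prod_mem_powerSumFiltration {ι : Type*} (s : Finset ι) {n a : ι → ℕ}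
    {x y : ι → MvPowerSeries ℕ ℚ} (hy : ∀ i ∈ s, y i ∈ powerSumFiltration (n i) (a i))
    (hxy : ∀ i ∈ s, x i - y i ∈ powerSumFiltration (n i) (a i + 1)) :
    ∏ i ∈ s, x i - ∏ i ∈ s, y i ∈ powerSumFiltration (∑ i ∈ s, n i) (∑ i ∈ s, a i + 1) := by
  induction s using Finset.cons_induction with
  | empty => simp
  | cons i s hi ih =>
    have hx : ∀ k ∈ s, x k ∈ powerSumFiltration (n k) (a k) := fun k hk => by
      rw [← sub_add_cancel (x k) (y k)]
      exact add_mem (powerSumFiltration_antitone _ (Nat.le_succ _) (hxy k (mem_cons_of_mem hk)))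
        (hy k (mem_cons_of_mem hk))
    have hsplit : x i * ∏ k ∈ s, x k - y i * ∏ k ∈ s, y k
        = (x i - y i) * ∏ k ∈ s, x k + y i * (∏ k ∈ s, x k - ∏ k ∈ s, y k) := by ring
    rw [prod_cons, prod_cons, hsplit, sum_cons, sum_cons]
    refine add_mem ?_ ?_
    · have := mul_mem_powerSumFiltration (hxy i (mem_cons_self i s))
        (prod_mem_powerSumFiltration s hx)
      rwa [add_right_comm] at this
    · have := mul_mem_powerSumFiltration (hy i (mem_cons_self i s))
        (ih (fun k hk => hy k (mem_cons_of_mem hk)) (fun k hk => hxy k (mem_cons_of_mem hk)))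
      rwa [← add_assoc] at this

/-- With `deg p_i = 1` (so `deg p_ν = ℓ(ν)`), the lowest-degree
part of the power sum expansion of `h_{n₁} ⋯ h_{n_j}` (all `n_i ≥ 1`) is
`(p_{n₁}/n₁) ⋯ (p_{n_j}/n_j)`: the product equals this term plus a linear
combination of `p_ν` with `ℓ(ν) > j`. -/
theorem lowest_degree_part_of_completeHomogeneous_product
    (j : ℕ) (n : Fin j → ℕ) (hpos : ∀ i, 0 < n i) :
    ∃ c : Nat.Partition (∑ i, n i) → ℚ,
      ∏ i, completeHomogeneous (n i)
        = (∏ i, ((n i : ℚ))⁻¹ • powerSum (n i))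
          + ∑ nu ∈ Finset.univ.filter
              (fun nu : Nat.Partition (∑ i, n i) => j < Multiset.card nu.parts),
              c nu • powerSumProd nu := by
  have hdiff := prod_sub_prod_mem_powerSumFiltration univ (a := fun _ => 1)
    (x := fun i => completeHomogeneous (n i)) (y := fun i => ((n i : ℚ))⁻¹ • powerSum (n i))
    (fun i _ => Submodule.smul_mem _ _ (powerSum_mem_powerSumFiltration (hpos i)))
    (fun i _ => completeHomogeneous_sub_mem_powerSumFiltration (hpos i))
  simp only [sum_const, card_univ, Fintype.card_fin, smul_eq_mul, mul_one] at hdiff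
  obtain ⟨c, hc⟩ := mem_powerSumFiltration_iff.1 hdiff
  exact ⟨c, eq_add_of_sub_eq' hc.symm⟩
end

section
/- Let σ ⊆ μ be partitions with ℓ(μ) ≤ k such that the skew shape μ/σ contains a k×k square of cells. If the Littlewood–Richardson coefficient c^{μ}_{σν} is nonzero, then ν has exactly k parts and ν_k ≥ k; that is, ℓ(ν) = rank(ν) = k. -/
/-- Cell `(i,j)` (1-indexed row `i`, column `j`) of the skew shape `μ/σ`. -/
def IsSkewCell (μ σ : ℕ → ℕ) (i j : ℕ) : Prop :=
  1 ≤ i ∧ σ i < j ∧ j ≤ μ i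

/-- The Littlewood–Richardson coefficient `c^μ_{σν}`: the number of semistandard
Young tableaux of skew shape `μ/σ` of content `ν` whose reverse reading word is
a lattice permutation. -/
noncomputable def LRCoeff (μ σ ν : ℕ → ℕ) : ℕ :=
  Nat.card {T : ℕ → ℕ → ℕ //
    (∀ i j, ¬ IsSkewCell μ σ i j → T i j = 0) ∧
    (∀ i j, IsSkewCell μ σ i j → 1 ≤ T i j) ∧
    (∀ i j j', IsSkewCell μ σ i j → IsSkewCell μ σ i j' → j ≤ j' → T i j ≤ T i j') ∧
    (∀ i i' j, IsSkewCell μ σ i j → IsSkewCell μ σ i' j → i < i' → T i j < T i' j) ∧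
    (∀ m, 1 ≤ m →
      ν m = Nat.card {p : ℕ × ℕ // IsSkewCell μ σ p.1 p.2 ∧ T p.1 p.2 = m}) ∧
    (∀ i j m, IsSkewCell μ σ i j → 1 ≤ m →
      Nat.card {p : ℕ × ℕ // IsSkewCell μ σ p.1 p.2 ∧
          (p.1 < i ∨ (p.1 = i ∧ j ≤ p.2)) ∧ T p.1 p.2 = m + 1}
        ≤ Nat.card {p : ℕ × ℕ // IsSkewCell μ σ p.1 p.2 ∧
          (p.1 < i ∨ (p.1 = i ∧ j ≤ p.2)) ∧ T p.1 p.2 = m})}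

/-- Let `σ ⊆ μ` be partitions with `ℓ(μ) ≤ k` such that the
skew shape `μ/σ` contains a `k × k` square of cells.  If the
Littlewood–Richardson coefficient `c^μ_{σν}` is nonzero, then `ν` has exactly
`k` parts and `ν_k ≥ k`, i.e. `ℓ(ν) = rank(ν) = k`. -/
theorem LRCoeff_square_forces_rank (μ σ ν : ℕ → ℕ) (k : ℕ) (hk : 1 ≤ k)
    (hμ : Antitone μ) (hσ : Antitone σ) (hν : Antitone ν)
    (hσμ : ∀ i, σ i ≤ μ i)
    (hlenμ : ∀ i, k < i → μ i = 0)
    (hsquare : ∃ i j, 1 ≤ i ∧ 1 ≤ j ∧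
        ∀ a b, a < k → b < k → IsSkewCell μ σ (i + a) (j + b))
    (hc : LRCoeff μ σ ν ≠ 0) :
    k ≤ ν k ∧ ∀ m, k < m → ν m = 0 := by
  classical
  rw [LRCoeff] at hc
  have hne : Nonempty {T : ℕ → ℕ → ℕ //
    (∀ i j, ¬ IsSkewCell μ σ i j → T i j = 0) ∧
    (∀ i j, IsSkewCell μ σ i j → 1 ≤ T i j) ∧
    (∀ i j j', IsSkewCell μ σ i j → IsSkewCell μ σ i j' → j ≤ j' → T i j ≤ T i j') ∧
    (∀ i i' j, IsSkewCell μ σ i j → IsSkewCell μ σ i' j → i < i' → T i j < T i' j) ∧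
    (∀ m, 1 ≤ m →
      ν m = Nat.card {p : ℕ × ℕ // IsSkewCell μ σ p.1 p.2 ∧ T p.1 p.2 = m}) ∧
    (∀ i j m, IsSkewCell μ σ i j → 1 ≤ m →
      Nat.card {p : ℕ × ℕ // IsSkewCell μ σ p.1 p.2 ∧
          (p.1 < i ∨ (p.1 = i ∧ j ≤ p.2)) ∧ T p.1 p.2 = m + 1}
        ≤ Nat.card {p : ℕ × ℕ // IsSkewCell μ σ p.1 p.2 ∧
          (p.1 < i ∨ (p.1 = i ∧ j ≤ p.2)) ∧ T p.1 p.2 = m})} := by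
    by_contra h
    rw [not_nonempty_iff] at h
    exact hc Nat.card_of_isEmpty
  obtain ⟨⟨T, h0, h1, hrow, hcol, hcontent, hlattice⟩⟩ := hne
  -- every cell is in a row ≤ k
  have hrowbound : ∀ i j, IsSkewCell μ σ i j → i ≤ k := by
    intro i j hcell
    by_contra h
    push_neg at h
    have := hlenμ i h
    obtain ⟨hi, hσj, hjμ⟩ := hcell
    omega
  -- the set of cells is finite
  have hfin : {p : ℕ × ℕ | IsSkewCell μ σ p.1 p.2}.Finite := by
    apply Set.Finite.subset (Set.finite_Icc ((1 : ℕ), (1 : ℕ)) (k, μ 1))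
    rintro ⟨i, j⟩ hp
    obtain ⟨hi, hσj, hjμ⟩ := hp
    have hik := hrowbound i j ⟨hi, hσj, hjμ⟩
    have hμ1 : μ i ≤ μ 1 := hμ hi
    simp only at hjμ hσj ⊢
    exact Set.mem_Icc.mpr ⟨⟨hi, by omega⟩, ⟨hik, by omega⟩⟩
  -- key: every entry is at most its row index
  have key : ∀ m i j, IsSkewCell μ σ i j → T i j = m → m ≤ i := by
    intro m
    induction m with
    | zero => intro i j _ _; omega
    | succ m ih =>
      intro i j hcell hT
      rcases Nat.eq_zero_or_pos m with hm | hm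
      · subst hm; exact hcell.1
      · have hlat := hlattice i j m hcell hm
        have finL : Finite {p : ℕ × ℕ // IsSkewCell μ σ p.1 p.2 ∧
            (p.1 < i ∨ (p.1 = i ∧ j ≤ p.2)) ∧ T p.1 p.2 = m + 1} := by
          have : {p : ℕ × ℕ | IsSkewCell μ σ p.1 p.2 ∧
              (p.1 < i ∨ (p.1 = i ∧ j ≤ p.2)) ∧ T p.1 p.2 = m + 1}.Finite :=
            hfin.subset (fun p hp => hp.1)
          exact this.to_subtype
        have finR : Finite {p : ℕ × ℕ // IsSkewCell μ σ p.1 p.2 ∧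
            (p.1 < i ∨ (p.1 = i ∧ j ≤ p.2)) ∧ T p.1 p.2 = m} := by
          have : {p : ℕ × ℕ | IsSkewCell μ σ p.1 p.2 ∧
              (p.1 < i ∨ (p.1 = i ∧ j ≤ p.2)) ∧ T p.1 p.2 = m}.Finite :=
            hfin.subset (fun p hp => hp.1)
          exact this.to_subtype
        have hneL : Nonempty {p : ℕ × ℕ // IsSkewCell μ σ p.1 p.2 ∧
            (p.1 < i ∨ (p.1 = i ∧ j ≤ p.2)) ∧ T p.1 p.2 = m + 1} :=
          ⟨⟨(i, j), hcell, Or.inr ⟨rfl, le_rfl⟩, hT⟩⟩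
        have hposL : 0 < Nat.card {p : ℕ × ℕ // IsSkewCell μ σ p.1 p.2 ∧
            (p.1 < i ∨ (p.1 = i ∧ j ≤ p.2)) ∧ T p.1 p.2 = m + 1} := Nat.card_pos
        have hposR : 0 < Nat.card {p : ℕ × ℕ // IsSkewCell μ σ p.1 p.2 ∧
            (p.1 < i ∨ (p.1 = i ∧ j ≤ p.2)) ∧ T p.1 p.2 = m} := lt_of_lt_of_le hposL hlat
        have hneR := (Nat.card_pos_iff.mp hposR).1
        obtain ⟨⟨⟨i', j'⟩, hc', hpre, hT'⟩⟩ := hneR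
        dsimp only at hc' hpre hT'
        rcases hpre with h | ⟨hEq, hj⟩
        · have := ih i' j' hc' hT'
          omega
        · subst hEq
          have := hrow i' j j' hcell hc' hj
          omega
  -- the square starts at row 1
  obtain ⟨i0, j0, hi0, hj0, hsq⟩ := hsquare
  have hi0one : i0 = 1 := by
    have hc1 := hsq (k - 1) 0 (by omega) (by omega)
    have := hrowbound _ _ hc1
    omega
  subst hi0one
  -- entries grow down columns of the square
  have hgrow : ∀ b, b < k → ∀ a, a < k → a + 1 ≤ T (1 + a) (j0 + b) := by
    intro b hb a
    induction a with
    | zero => intro _; exact h1 _ _ (hsq 0 b (by omega) hb)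
    | succ a ih =>
      intro ha
      have h₁ := ih (by omega)
      have h₂ := hcol (1 + a) (1 + (a + 1)) (j0 + b)
        (hsq a b (by omega) hb) (hsq (a + 1) b ha hb) (by omega)
      omega
  have hTk : ∀ b, b < k → T k (j0 + b) = k := by
    intro b hb
    have hcell := hsq (k - 1) b (by omega) hb
    have h₁ := hgrow b hb (k - 1) (by omega)
    have h₂ := key (T (1 + (k - 1)) (j0 + b)) (1 + (k - 1)) (j0 + b) hcell rfl
    have e : 1 + (k - 1) = k := by omega
    rw [e] at h₁ h₂
    omega
  constructor
  · -- k ≤ ν k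
    rw [hcontent k hk]
    have finK : Finite {p : ℕ × ℕ // IsSkewCell μ σ p.1 p.2 ∧ T p.1 p.2 = k} := by
      have : {p : ℕ × ℕ | IsSkewCell μ σ p.1 p.2 ∧ T p.1 p.2 = k}.Finite :=
        hfin.subset (fun p hp => hp.1)
      exact this.to_subtype
    have hcellk : ∀ b : Fin k, IsSkewCell μ σ k (j0 + b) := by
      intro b
      have hcell := hsq (k - 1) b (by omega) b.2
      have e : 1 + (k - 1) = k := by omega
      rwa [e] at hcell
    have hinj : Function.Injective
        (fun b : Fin k => (⟨(k, j0 + b), hcellk b, hTk b b.2⟩ :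
          {p : ℕ × ℕ // IsSkewCell μ σ p.1 p.2 ∧ T p.1 p.2 = k})) := by
      intro b b' hbb
      have : j0 + (b : ℕ) = j0 + (b' : ℕ) := congrArg (fun x => x.1.2) hbb
      exact Fin.ext (by omega)
    have := Nat.card_le_card_of_injective _ hinj
    simpa using this
  · -- parts beyond k vanish
    intro m hm
    rw [hcontent m (by omega)]
    have : IsEmpty {p : ℕ × ℕ // IsSkewCell μ σ p.1 p.2 ∧ T p.1 p.2 = m} := by
      constructor
      rintro ⟨⟨i, j⟩, hcell, hT⟩
      have h₁ := key m i j hcell hT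
      have h₂ := hrowbound i j hcell
      omega
    exact Nat.card_of_isEmpty
end

section
/- Fix a finite set of 2k distinct integer endpoints partitioned into 'left' points u and 'right' points v with every left point less than every right point. For any function assigning lengths, the signed sum Σ_I (−1)^{c(I)} x^I over all perfect matchings I between the k left points and k right points, with labels α_1,…,α_k ∈ ℤ_{>0} attached to the k intervals and x^I = Π_i x_{α_i}^{v_i − u_i}, vanishes when restricted to labellings in which at least one label is repeated. Here c(I) is the number of crossing pairs (u_i < u_j < v_i < v_j). -/
/-!
Because every left point precedes every right point, two intervals cross exactly when their
left endpoints and their right endpoints come in the same order. After sorting the left points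
increasingly and the right points decreasingly, `c(π)` becomes the number of inversions of a
conjugate of `π`, so `(-1)^c(π) = ε · sign π` with `ε = ±1` independent of `π`. The signed sum is
therefore `ε · det (x_{α i}^{v j - u i})`. Multiplying row `i` by `x_{α i}^{u i}` turns this matrix
into `(x_{α i}^{v j})`, which has two equal rows as soon as a label is repeated.
-/

open Finset Equiv

theorem Equiv.Perm.sign_eq_neg_one_pow_card_inversions {n : ℕ} (σ : Perm (Fin n)) :
    (Perm.sign σ : ℤ) = (-1) ^ #{p : Fin n × Fin n | p.1 < p.2 ∧ σ p.2 < σ p.1} := by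
  rw [Perm.sign_eq_prod_prod_Iio, ← prod_const, prod_filter, Fintype.prod_prod_type, prod_comm]
  push_cast
  refine prod_congr rfl fun j _ => ?_
  rw [← filter_gt_eq_Iio, prod_filter]
  refine prod_congr rfl fun i _ => ?_
  have hσ := σ.injective.ne_iff (x := i) (y := j)
  simp only [apply_ite Units.val, Units.val_one, Units.val_neg]
  split_ifs <;> grind

theorem exists_perm_strictMono_comp {n : ℕ} {α : Type*} [LinearOrder α] {u : Fin n → α}
    (hu : Function.Injective u) : ∃ σ : Perm (Fin n), StrictMono (u ∘ σ) :=
  ⟨Tuple.sort u,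
    (Tuple.monotone_sort u).strictMono_of_injective (hu.comp (Tuple.sort u).injective)⟩

theorem neg_one_pow_card_concordant_pairs_eq_sign_mul_sign {n : ℕ} {α β : Type*}
    [LinearOrder α] [LinearOrder β] {u : Fin n → α} {w : Fin n → β} {e f : Perm (Fin n)}
    (he : StrictMono (u ∘ e)) (hf : StrictAnti (w ∘ f)) :
    (-1 : ℤ) ^ #{p : Fin n × Fin n | u p.1 < u p.2 ∧ w p.1 < w p.2}
      = Perm.sign e * Perm.sign f := by
  have hu : ∀ i j, u i < u j ↔ e.symm i < e.symm j := fun i j => by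
    simpa using he.lt_iff_lt (a := e.symm i) (b := e.symm j)
  have hw : ∀ i j, w i < w j ↔ f.symm j < f.symm i := fun i j => by
    simpa using hf.lt_iff_gt (a := f.symm i) (b := f.symm j)
  have hcard : #{p : Fin n × Fin n | u p.1 < u p.2 ∧ w p.1 < w p.2}
      = #{p : Fin n × Fin n | p.1 < p.2 ∧ (f⁻¹ * e) p.2 < (f⁻¹ * e) p.1} := by
    refine card_equiv (e.prodCongr e).symm fun p => ?_
    simp only [mem_filter, mem_univ, true_and, hu, hw]
    simp [Perm.mul_apply, Perm.inv_def]
  rw [hcard, ← Perm.sign_eq_neg_one_pow_card_inversions, Perm.sign_mul, Perm.sign_inv, mul_comm]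
  push_cast
  rfl

theorem Matrix.det_pow_sub_eq_zero_of_not_injective {R ι : Type*} [CommRing R] [IsDomain R]
    [Fintype ι] [DecidableEq ι] {x : ι → R} (hx0 : ∀ i, x i ≠ 0) (hx : ¬ Function.Injective x)
    {u v : ι → ℕ} (huv : ∀ i j, u i ≤ v j) :
    det (of fun i j => x i ^ (v j - u i)) = 0 := by
  obtain ⟨a, b, hab, hne⟩ := Function.not_injective_iff.mp hx
  have hfactor : of (fun i j => x i ^ v j)
      = diagonal (fun i => x i ^ u i) * of (fun i j => x i ^ (v j - u i)) := by
    ext i j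
    simp [diagonal_mul, ← pow_add, Nat.add_sub_cancel' (huv i j)]
  have hrows : det (of fun i j => x i ^ v j) = 0 :=
    det_zero_of_row_eq hne (funext fun j => by simp [hab])
  rw [hfactor, det_mul, det_diagonal] at hrows
  exact (mul_eq_zero.mp hrows).resolve_left
    (prod_ne_zero_iff.mpr fun i _ => pow_ne_zero _ (hx0 i))

/-- Fix `2k` distinct endpoints: left points `u 0, …, u (k-1)`
and right points `v 0, …, v (k-1)`, every left point less than every right
point.  An interval set is a perfect matching, i.e. a permutation `π` pairing
`u i` with `v (π i)`; its crossing number `c` is the number of pairs `(i, j)`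
with `u i < u j < v (π i) < v (π j)`.  Fix a labelling `α` of the intervals
(indexed by their left endpoints) by positive-integer variable indices, with at
least one label repeated (i.e. `α` is not injective).  Then the signed sum over
all matchings of `(-1)^c x^I`, where `x^I = Π_i x_{α i}^{v (π i) - u i}`,
vanishes. -/
theorem repeated_label_signed_sum_vanishes (k : ℕ)
    (u v : Fin k → ℕ)
    (hu : Function.Injective u) (hv : Function.Injective v)
    (huv : ∀ i j, u i < v j)
    (α : Fin k → ℕ) (hα : ¬ Function.Injective α) :
    ∑ π : Equiv.Perm (Fin k),
      ((-1 : ℤ) ^ (Finset.univ.filter fun p : Fin k × Fin k =>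
          u p.1 < u p.2 ∧ u p.2 < v (π p.1) ∧ v (π p.1) < v (π p.2)).card)
        • ∏ i, (MvPolynomial.X (α i) : MvPolynomial ℕ ℤ) ^ (v (π i) - u i)
      = 0 := by
  obtain ⟨e, he⟩ := exists_perm_strictMono_comp hu
  obtain ⟨f, hf⟩ := exists_perm_strictMono_comp (OrderDual.toDual.injective.comp hv)
  have hsign : ∀ π : Perm (Fin k), (-1 : ℤ) ^ (Finset.univ.filter fun p : Fin k × Fin k =>
      u p.1 < u p.2 ∧ u p.2 < v (π p.1) ∧ v (π p.1) < v (π p.2)).card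
        = (Perm.sign e * Perm.sign f : ℤ) * Perm.sign π := by
    intro π
    have hanti : StrictAnti ((v ∘ π) ∘ (π⁻¹ * f)) := fun a b hab => by
      simpa [Perm.mul_apply] using hf hab
    simp only [huv, true_and]
    refine (neg_one_pow_card_concordant_pairs_eq_sign_mul_sign he hanti).trans ?_
    rw [Perm.sign_mul, Perm.sign_inv]
    push_cast
    ring
  have hdet := Matrix.det_pow_sub_eq_zero_of_not_injective
    (x := fun i => (MvPolynomial.X (α i) : MvPolynomial ℕ ℤ)) (fun i => MvPolynomial.X_ne_zero _)
    (fun h => hα fun a b hab => h (congrArg MvPolynomial.X hab)) (fun i j => (huv i j).le)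
  rw [← Matrix.det_transpose, Matrix.det_apply] at hdet
  calc _ = (Perm.sign e * Perm.sign f : ℤ) • ∑ π : Perm (Fin k), Perm.sign π •
        ∏ i, (MvPolynomial.X (α i) : MvPolynomial ℕ ℤ) ^ (v (π i) - u i) := by
        simp_rw [hsign, mul_smul, smul_sum, Units.smul_def]
    _ = 0 := by simpa using hdet
end
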